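/- Suppose every second-order partial derivative of the Walker metric functions A, B, C involving only the variables v and V is a constant function, i.e. ∂_v^i ∂_V^j F is constant for each F ∈ {A, B, C} and all i + j = 2. Let μ : ℝ⁴ → ℝ be smooth with ∂_v^i ∂_V^j μ = 0 for all i + j = 2. Then for every n ≥ 1 and every composition W (in any order) of n operators taken from {∂_v, ∂_V} and n − 1 operators taken from {D', δ}, there exist real constants c₁, c₂ such that W μ = c₁ ∂_v μ + c₂ ∂_V μ, where D' = ∂_u − A ∂_v − (1/2) C ∂_V and δ = −∂_U + B ∂_V + (1/2) C ∂_v. -/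

import Mathlib

noncomputable section

/-- Real-valued functions on ℝ⁴, with coordinates `x 0 = u`, `x 1 = v`, `x 2 = U`, `x 3 = V`. -/
abbrev Fn : Type := (Fin 4 → ℝ) → ℝ

/-- Partial derivative in the `i`-th coordinate direction. -/
def pd (i : Fin 4) (f : Fn) : Fn :=
  fun x => lineDeriv ℝ f x (Pi.single i 1)

/-- ∂/∂u -/ def pu : Fn → Fn := pd 0
/-- ∂/∂v -/ def pv : Fn → Fn := pd 1
/-- ∂/∂U -/ def pU : Fn → Fn := pd 2
/-- ∂/∂V -/ def pV : Fn → Fn := pd 3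

/-- The frame directional derivative D' = ∂_u − A ∂_v − (1/2) C ∂_V. -/
def Dp (A C : Fn) (f : Fn) : Fn :=
  fun x => pu f x - A x * pv f x - (1/2) * C x * pV f x

/-- The frame directional derivative δ = −∂_U + B ∂_V + (1/2) C ∂_v. -/
def delta (B C : Fn) (f : Fn) : Fn :=
  fun x => -(pU f x) + B x * pV f x + (1/2) * C x * pv f x

/-- Interpretation of operator tokens: `0 ↦ ∂_v`, `1 ↦ ∂_V`, `2 ↦ D'`, `3 ↦ δ`. -/
def opOf (A B C : Fn) : Fin 4 → (Fn → Fn) := ![pv, pV, Dp A C, delta B C]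

/-- Apply a list of operator tokens (composition, leftmost applied last). -/
def applyOps (A B C : Fn) (L : List (Fin 4)) (f : Fn) : Fn :=
  L.foldr (fun t g => opOf A B C t g) f


lemma pd_apply (i : Fin 4) {f : Fn} (hf : ContDiff ℝ (⊤ : ℕ∞) f) (x : Fin 4 → ℝ) :
    pd i f x = fderiv ℝ f x (Pi.single i 1) :=
  ((hf.differentiable (by simp)) x).lineDeriv_eq_fderiv

lemma contDiff_pd (i : Fin 4) {f : Fn} (hf : ContDiff ℝ (⊤ : ℕ∞) f) : ContDiff ℝ (⊤ : ℕ∞) (pd i f) := by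
  have h : pd i f = fun x => fderiv ℝ f x (Pi.single i 1) := funext (pd_apply i hf)
  rw [h]
  exact (hf.fderiv_right (by simp)).clm_apply contDiff_const

lemma pd_add (i : Fin 4) {f g : Fn} (hf : ContDiff ℝ (⊤ : ℕ∞) f) (hg : ContDiff ℝ (⊤ : ℕ∞) g) :
    pd i (fun x => f x + g x) = fun x => pd i f x + pd i g x := by
  funext x
  rw [pd_apply i (hf.add hg) x, pd_apply i hf x, pd_apply i hg x,
    fderiv_fun_add ((hf.differentiable (by simp)) x) ((hg.differentiable (by simp)) x)]
  simp

lemma pd_mul (i : Fin 4) {f g : Fn} (hf : ContDiff ℝ (⊤ : ℕ∞) f) (hg : ContDiff ℝ (⊤ : ℕ∞) g) :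
    pd i (fun x => f x * g x) = fun x => pd i f x * g x + f x * pd i g x := by
  funext x
  rw [pd_apply i (hf.mul hg) x, pd_apply i hf x, pd_apply i hg x,
    fderiv_fun_mul ((hf.differentiable (by simp)) x) ((hg.differentiable (by simp)) x)]
  simp only [ContinuousLinearMap.add_apply, ContinuousLinearMap.smul_apply,
    smul_eq_mul]
  ring

lemma pd_const (i : Fin 4) (c : ℝ) : pd i (fun _ => c) = fun _ => 0 := by
  funext x
  simp only [pd, lineDeriv]
  simp

lemma pd_smul (i : Fin 4) (c : ℝ) {f : Fn} (hf : ContDiff ℝ (⊤ : ℕ∞) f) :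
    pd i (fun x => c * f x) = fun x => c * pd i f x := by
  funext x
  rw [pd_apply i (contDiff_const.mul hf) x, pd_apply i hf x,
    fderiv_const_mul ((hf.differentiable (by simp)) x) c]
  simp

lemma pd_comm (i j : Fin 4) {f : Fn} (hf : ContDiff ℝ (⊤ : ℕ∞) f) :
    pd i (pd j f) = pd j (pd i f) := by
  funext x
  have hsymm : IsSymmSndFDerivAt ℝ f x := (hf.contDiffAt).isSymmSndFDerivAt (by
    rw [minSmoothness_of_isRCLikeNormedField]; exact WithTop.coe_le_coe.mpr le_top)
  have key : ∀ (a b : Fin 4), pd a (pd b f) x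
      = fderiv ℝ (fderiv ℝ f) x (Pi.single a 1) (Pi.single b 1) := by
    intro a b
    have h1 : pd b f = fun y => fderiv ℝ f y (Pi.single b 1) := funext (pd_apply b hf)
    rw [pd_apply a (by rw [h1] at *; exact (hf.fderiv_right (by simp)).clm_apply contDiff_const)]
    rw [h1]
    have hdiff : DifferentiableAt ℝ (fderiv ℝ f) x :=
      ((hf.fderiv_right (m := 1) (WithTop.coe_le_coe.mpr le_top)).differentiable one_ne_zero) x
    rw [fderiv_clm_apply hdiff (differentiableAt_const _)]
    simp
  rw [key i j, key j i]
  exact hsymm.eq _ _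

lemma pd_zero_fn (a : Fin 4) : pd a (fun _ => (0 : ℝ)) = fun _ => 0 := pd_const a 0

lemma contDiff_pd_iter (a : Fin 4) (m : ℕ) {f : Fn} (hf : ContDiff ℝ (⊤ : ℕ∞) f) :
    ContDiff ℝ (⊤ : ℕ∞) ((pd a)^[m] f) := by
  induction m generalizing f with
  | zero => exact hf
  | succ m ih => rw [Function.iterate_succ_apply]; exact ih (contDiff_pd a hf)

lemma pd_iter_comm (a b : Fin 4) (m : ℕ) {f : Fn} (hf : ContDiff ℝ (⊤ : ℕ∞) f) :
    pd a ((pd b)^[m] f) = (pd b)^[m] (pd a f) := by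
  induction m generalizing f with
  | zero => rfl
  | succ m ih =>
      rw [Function.iterate_succ_apply, Function.iterate_succ_apply, ih (contDiff_pd b hf),
        pd_comm a b hf]

lemma pd_iter_zero (a : Fin 4) (m : ℕ) : (pd a)^[m] (fun _ => (0:ℝ)) = fun _ => 0 := by
  induction m with
  | zero => rfl
  | succ m ih => rw [Function.iterate_succ_apply, pd_zero_fn]; exact ih

/-- Normalized iterated derivative: p times ∂u, q times ∂U, i times ∂v, j times ∂V. -/
def ND (p q i j : ℕ) (f : Fn) : Fn :=
  (pd 0)^[p] ((pd 2)^[q] ((pd 1)^[i] ((pd 3)^[j] f)))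

lemma contDiff_ND (p q i j : ℕ) {f : Fn} (hf : ContDiff ℝ (⊤ : ℕ∞) f) : ContDiff ℝ (⊤ : ℕ∞) (ND p q i j f) :=
  contDiff_pd_iter _ _ (contDiff_pd_iter _ _ (contDiff_pd_iter _ _ (contDiff_pd_iter _ _ hf)))

lemma pd0_ND (p q i j : ℕ) (f : Fn) : pd 0 (ND p q i j f) = ND (p+1) q i j f :=
  (Function.iterate_succ_apply' _ _ _).symm

lemma pd2_ND (p q i j : ℕ) {f : Fn} (hf : ContDiff ℝ (⊤ : ℕ∞) f) :
    pd 2 (ND p q i j f) = ND p (q+1) i j f := by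
  unfold ND
  rw [pd_iter_comm 2 0 p (contDiff_pd_iter _ _ (contDiff_pd_iter _ _ (contDiff_pd_iter _ _ hf))),
    Function.iterate_succ_apply' (pd 2) q]

lemma pd1_ND (p q i j : ℕ) {f : Fn} (hf : ContDiff ℝ (⊤ : ℕ∞) f) :
    pd 1 (ND p q i j f) = ND p q (i+1) j f := by
  unfold ND
  rw [pd_iter_comm 1 0 p (contDiff_pd_iter _ _ (contDiff_pd_iter _ _ (contDiff_pd_iter _ _ hf))),
    pd_iter_comm 1 2 q (contDiff_pd_iter _ _ (contDiff_pd_iter _ _ hf)),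
    Function.iterate_succ_apply' (pd 1) i]

lemma pd3_ND (p q i j : ℕ) {f : Fn} (hf : ContDiff ℝ (⊤ : ℕ∞) f) :
    pd 3 (ND p q i j f) = ND p q i (j+1) f := by
  unfold ND
  rw [pd_iter_comm 3 0 p (contDiff_pd_iter _ _ (contDiff_pd_iter _ _ (contDiff_pd_iter _ _ hf))),
    pd_iter_comm 3 2 q (contDiff_pd_iter _ _ (contDiff_pd_iter _ _ hf)),
    pd_iter_comm 3 1 i (contDiff_pd_iter _ _ hf),
    Function.iterate_succ_apply' (pd 3) j]

/-- A coefficient factor: an iterated derivative of one of the metric functions,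
with at most one v/V-derivative recorded (two such derivatives give a constant). -/
structure Fac where
  g : Fin 3
  p : ℕ
  q : ℕ
  i : ℕ
  j : ℕ
  hij : i + j ≤ 1

def gOf (A B C : Fn) : Fin 3 → Fn := ![A, B, C]

def Fac.val (A B C : Fn) (F : Fac) : Fn := ND F.p F.q F.i F.j (gOf A B C F.g)

def Fac.wt (F : Fac) : ℤ := (F.i : ℤ) + F.j - 2 - F.p - F.q

lemma Fac.wt_le (F : Fac) : F.wt ≤ -1 := by
  have := F.hij
  unfold Fac.wt
  omega

/-- A basic term: a product of factors times an iterated derivative of μ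
with at most one v/V-derivative. -/
structure Tm where
  facs : List Fac
  p : ℕ
  q : ℕ
  i : ℕ
  j : ℕ
  hij : i + j ≤ 1

def facProd (A B C : Fn) : List Fac → Fn
  | [] => fun _ => 1
  | F :: l => fun x => F.val A B C x * facProd A B C l x

def Tm.val (A B C μ : Fn) (t : Tm) : Fn :=
  fun x => facProd A B C t.facs x * ND t.p t.q t.i t.j μ x

def Tm.wt (t : Tm) : ℤ :=
  (t.i : ℤ) + t.j - t.p - t.q + (t.facs.map Fac.wt).sum

/-- The module of functions spanned by terms of weight at least k. -/
def Good (A B C μ : Fn) (k : ℤ) : Submodule ℝ Fn :=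
  Submodule.span ℝ {f : Fn | ∃ t : Tm, k ≤ t.wt ∧ f = t.val A B C μ}

lemma Good_mono (A B C μ : Fn) {k k' : ℤ} (h : k ≤ k') :
    Good A B C μ k' ≤ Good A B C μ k := by
  apply Submodule.span_mono
  rintro f ⟨t, ht, rfl⟩
  exact ⟨t, le_trans h ht, rfl⟩

lemma term_mem (A B C μ : Fn) (t : Tm) {k : ℤ} (hk : k ≤ t.wt) :
    t.val A B C μ ∈ Good A B C μ k :=
  Submodule.subset_span ⟨t, hk, rfl⟩

section Main

variable (A B C μ : Fn)
variable (hA : ContDiff ℝ (⊤ : ℕ∞) A) (hB : ContDiff ℝ (⊤ : ℕ∞) B) (hC : ContDiff ℝ (⊤ : ℕ∞) C)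
variable (hμ : ContDiff ℝ (⊤ : ℕ∞) μ)

include hA hB hC

lemma contDiff_gOf (g : Fin 3) : ContDiff ℝ (⊤ : ℕ∞) (gOf A B C g) := by
  fin_cases g <;> simpa [gOf]

lemma contDiff_facVal (F : Fac) : ContDiff ℝ (⊤ : ℕ∞) (F.val A B C) :=
  contDiff_ND _ _ _ _ (contDiff_gOf A B C hA hB hC F.g)

lemma contDiff_facProd (l : List Fac) : ContDiff ℝ (⊤ : ℕ∞) (facProd A B C l) := by
  induction l with
  | nil => exact contDiff_const
  | cons F l ih => exact (contDiff_facVal A B C hA hB hC F).mul ih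

include hμ

lemma contDiff_tmVal (t : Tm) : ContDiff ℝ (⊤ : ℕ∞) (t.val A B C μ) :=
  (contDiff_facProd A B C hA hB hC t.facs).mul (contDiff_ND _ _ _ _ hμ)

end Main

lemma iter_const_exists (a : Fin 4) (m : ℕ) (c : ℝ) :
    ∃ c' : ℝ, (pd a)^[m] (fun _ => c) = fun _ => c' := by
  cases m with
  | zero => exact ⟨c, rfl⟩
  | succ m =>
      refine ⟨0, ?_⟩
      rw [Function.iterate_succ_apply, pd_const]
      exact pd_iter_zero a m

lemma wt_cons (F : Fac) (l : List Fac) (p q i j : ℕ) (hij : i + j ≤ 1) :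
    Tm.wt ⟨F :: l, p, q, i, j, hij⟩ = F.wt + Tm.wt ⟨l, p, q, i, j, hij⟩ := by
  simp [Tm.wt]
  ring

section Closure

variable {A B C μ : Fn}
variable (hA : ContDiff ℝ (⊤ : ℕ∞) A) (hB : ContDiff ℝ (⊤ : ℕ∞) B) (hC : ContDiff ℝ (⊤ : ℕ∞) C)
variable (hμ : ContDiff ℝ (⊤ : ℕ∞) μ)
variable (h2 : ∀ g : Fin 3, ∀ i j : ℕ, i + j = 2 →
  ∃ c : ℝ, (pd 1)^[i] ((pd 3)^[j] (gOf A B C g)) = fun _ => c)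
variable (hμ2 : ∀ i j : ℕ, i + j = 2 → (pd 1)^[i] ((pd 3)^[j] μ) = fun _ => 0)

lemma ND_mu_zero (hμ2 : ∀ i j : ℕ, i + j = 2 → (pd 1)^[i] ((pd 3)^[j] μ) = fun _ => 0)
    (p q i j : ℕ) (h : i + j = 2) : ND p q i j μ = fun _ => 0 := by
  unfold ND
  rw [hμ2 i j h, pd_iter_zero, pd_iter_zero]

lemma ND_g_const (h2 : ∀ g : Fin 3, ∀ i j : ℕ, i + j = 2 →
      ∃ c : ℝ, (pd 1)^[i] ((pd 3)^[j] (gOf A B C g)) = fun _ => c)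
    (g : Fin 3) (p q i j : ℕ) (h : i + j = 2) :
    ∃ c : ℝ, ND p q i j (gOf A B C g) = fun _ => c := by
  obtain ⟨c, hc⟩ := h2 g i j h
  unfold ND
  rw [hc]
  obtain ⟨c', hc'⟩ := iter_const_exists 2 q c
  rw [hc']
  exact iter_const_exists 0 p c'

include hA hB hC hμ in
lemma mul_fac {k : ℤ} {f : Fn} (hf : f ∈ Good A B C μ k) (F : Fac) :
    (fun x => F.val A B C x * f x) ∈ Good A B C μ (k + F.wt) := by
  induction hf using Submodule.span_induction with
  | mem f hfm =>
      obtain ⟨t, ht, rfl⟩ := hfm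
      have : (fun x => F.val A B C x * t.val A B C μ x)
          = Tm.val A B C μ ⟨F :: t.facs, t.p, t.q, t.i, t.j, t.hij⟩ := by
        funext x
        simp [Tm.val, facProd, mul_assoc]
      rw [this]
      apply term_mem
      rw [show (⟨F :: t.facs, t.p, t.q, t.i, t.j, t.hij⟩ : Tm)
          = ⟨F :: t.facs, t.p, t.q, t.i, t.j, t.hij⟩ from rfl, wt_cons]
      have : Tm.wt ⟨t.facs, t.p, t.q, t.i, t.j, t.hij⟩ = t.wt := rfl
      omega
  | zero =>
      have : (fun x => F.val A B C x * (0 : Fn) x) = (0 : Fn) := by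
        funext x; simp
      rw [this]; exact Submodule.zero_mem _
  | add f g hfm hgm ihf ihg =>
      have : (fun x => F.val A B C x * (f + g) x)
          = (fun x => F.val A B C x * f x) + (fun x => F.val A B C x * g x) := by
        funext x; simp [mul_add]
      rw [this]; exact Submodule.add_mem _ ihf ihg
  | smul c f hfm ihf =>
      have : (fun x => F.val A B C x * (c • f) x)
          = c • (fun x => F.val A B C x * f x) := by
        funext x; simp [smul_eq_mul]; ring
      rw [this]; exact Submodule.smul_mem _ _ ihf

include hA hB hC hμ in
lemma pd13_ND_mu (a : Fin 4) (ha : a = 1 ∨ a = 3) (p q i j : ℕ) :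
    ∃ i' j' : ℕ, i' + j' = i + j + 1 ∧ pd a (ND p q i j μ) = ND p q i' j' μ := by
  rcases ha with rfl | rfl
  · exact ⟨i + 1, j, by omega, pd1_ND p q i j hμ⟩
  · exact ⟨i, j + 1, by omega, pd3_ND p q i j hμ⟩

include hA hB hC in
lemma pd13_ND_g (a : Fin 4) (ha : a = 1 ∨ a = 3) (g : Fin 3) (p q i j : ℕ) :
    ∃ i' j' : ℕ, i' + j' = i + j + 1 ∧
      pd a (ND p q i j (gOf A B C g)) = ND p q i' j' (gOf A B C g) := by
  have hg := contDiff_gOf A B C hA hB hC g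
  rcases ha with rfl | rfl
  · exact ⟨i + 1, j, by omega, pd1_ND p q i j hg⟩
  · exact ⟨i, j + 1, by omega, pd3_ND p q i j hg⟩

include hA hB hC in
lemma pd02_ND_g (a : Fin 4) (ha : a = 0 ∨ a = 2) (g : Fin 3) (p q i j : ℕ) :
    ∃ p' q' : ℕ, p' + q' = p + q + 1 ∧
      pd a (ND p q i j (gOf A B C g)) = ND p' q' i j (gOf A B C g) := by
  have hg := contDiff_gOf A B C hA hB hC g
  rcases ha with rfl | rfl
  · exact ⟨p + 1, q, by omega, pd0_ND p q i j _⟩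
  · exact ⟨p, q + 1, by omega, pd2_ND p q i j hg⟩

include hμ in
lemma pd02_ND_mu (a : Fin 4) (ha : a = 0 ∨ a = 2) (p q i j : ℕ) :
    ∃ p' q' : ℕ, p' + q' = p + q + 1 ∧ pd a (ND p q i j μ) = ND p' q' i j μ := by
  rcases ha with rfl | rfl
  · exact ⟨p + 1, q, by omega, pd0_ND p q i j _⟩
  · exact ⟨p, q + 1, by omega, pd2_ND p q i j hμ⟩

end Closure

set_option linter.unusedSectionVars false

section Closure2

variable {A B C μ : Fn}
variable (hA : ContDiff ℝ (⊤ : ℕ∞) A) (hB : ContDiff ℝ (⊤ : ℕ∞) B) (hC : ContDiff ℝ (⊤ : ℕ∞) C)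
variable (hμ : ContDiff ℝ (⊤ : ℕ∞) μ)
variable (h2 : ∀ g : Fin 3, ∀ i j : ℕ, i + j = 2 →
  ∃ c : ℝ, (pd 1)^[i] ((pd 3)^[j] (gOf A B C g)) = fun _ => c)
variable (hμ2 : ∀ i j : ℕ, i + j = 2 → (pd 1)^[i] ((pd 3)^[j] μ) = fun _ => 0)

include hA hB hC hμ h2 hμ2 in
lemma pd13_term (a : Fin 4) (ha : a = 1 ∨ a = 3) (l : List Fac) (p q i j : ℕ)
    (hij : i + j ≤ 1) :
    pd a (Tm.val A B C μ ⟨l, p, q, i, j, hij⟩)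
      ∈ Good A B C μ (Tm.wt ⟨l, p, q, i, j, hij⟩ + 1) := by
  induction l with
  | nil =>
      have hval : Tm.val A B C μ ⟨[], p, q, i, j, hij⟩ = ND p q i j μ := by
        funext x; simp [Tm.val, facProd]
      obtain ⟨i', j', hs, heq⟩ := pd13_ND_mu hA hB hC hμ a ha p q i j
      rw [hval, heq]
      rcases Nat.le_one_iff_eq_zero_or_eq_one.mp hij with h0 | h1
      · have hij' : i' + j' ≤ 1 := by omega
        have hval' : ND p q i' j' μ = Tm.val A B C μ ⟨[], p, q, i', j', hij'⟩ := by
          funext x; simp [Tm.val, facProd]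
        rw [hval']
        apply term_mem
        simp only [Tm.wt, List.map_nil, List.sum_nil]
        push_cast
        omega
      · rw [ND_mu_zero hμ2 p q i' j' (by omega)]
        exact Submodule.zero_mem _
  | cons F l ih =>
      have hval : Tm.val A B C μ ⟨F :: l, p, q, i, j, hij⟩
          = fun x => F.val A B C x * Tm.val A B C μ ⟨l, p, q, i, j, hij⟩ x := by
        funext x; simp [Tm.val, facProd, mul_assoc]
      rw [hval, pd_mul a (contDiff_facVal A B C hA hB hC F)
        (contDiff_tmVal A B C μ hA hB hC hμ ⟨l, p, q, i, j, hij⟩)]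
      have hsplit : (fun x => pd a (F.val A B C) x * Tm.val A B C μ ⟨l, p, q, i, j, hij⟩ x
            + F.val A B C x * pd a (Tm.val A B C μ ⟨l, p, q, i, j, hij⟩) x)
          = (fun x => pd a (F.val A B C) x * Tm.val A B C μ ⟨l, p, q, i, j, hij⟩ x)
            + (fun x => F.val A B C x * pd a (Tm.val A B C μ ⟨l, p, q, i, j, hij⟩) x) := rfl
      rw [hsplit]
      apply Submodule.add_mem
      · -- derivative hits the factor F
        rcases Nat.le_one_iff_eq_zero_or_eq_one.mp F.hij with h0 | h1
        · obtain ⟨i', j', hs, heq⟩ := pd13_ND_g hA hB hC a ha F.g F.p F.q F.i F.j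
          have hij' : i' + j' ≤ 1 := by omega
          have hF' : pd a (F.val A B C) = Fac.val A B C ⟨F.g, F.p, F.q, i', j', hij'⟩ := heq
          rw [hF']
          have : (fun x => Fac.val A B C ⟨F.g, F.p, F.q, i', j', hij'⟩ x
                * Tm.val A B C μ ⟨l, p, q, i, j, hij⟩ x)
              = Tm.val A B C μ ⟨⟨F.g, F.p, F.q, i', j', hij'⟩ :: l, p, q, i, j, hij⟩ := by
            funext x; simp [Tm.val, facProd, mul_assoc]
          rw [this]
          apply term_mem
          rw [wt_cons, wt_cons]
          have h1 : Fac.wt ⟨F.g, F.p, F.q, i', j', hij'⟩ = F.wt + 1 := by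
            simp only [Fac.wt]; push_cast; omega
          omega
        · obtain ⟨c, hc⟩ := ND_g_const h2 F.g F.p F.q (F.i + (1 - F.j)) (F.j + (1 - (1 - F.j)))
            (by omega)
          obtain ⟨i', j', hs, heq⟩ := pd13_ND_g hA hB hC a ha F.g F.p F.q F.i F.j
          obtain ⟨c, hc⟩ := ND_g_const h2 F.g F.p F.q i' j' (by omega)
          rw [show pd a (F.val A B C) = fun _ => c from heq.trans hc]
          have : (fun x => (fun _ => c : Fn) x * Tm.val A B C μ ⟨l, p, q, i, j, hij⟩ x)
              = c • Tm.val A B C μ ⟨l, p, q, i, j, hij⟩ := by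
            funext x; simp [smul_eq_mul]
          rw [this]
          have hmem : Tm.val A B C μ ⟨l, p, q, i, j, hij⟩
              ∈ Good A B C μ (Tm.wt ⟨l, p, q, i, j, hij⟩) := term_mem _ _ _ _ _ le_rfl
          have hle : Tm.wt ⟨F :: l, p, q, i, j, hij⟩ + 1 ≤ Tm.wt ⟨l, p, q, i, j, hij⟩ := by
            rw [wt_cons]
            have := F.wt_le
            omega
          exact Good_mono A B C μ hle (Submodule.smul_mem _ _ hmem)
      · -- derivative hits the rest of the term
        have hrest := mul_fac hA hB hC hμ ih F
        have harith : Tm.wt ⟨F :: l, p, q, i, j, hij⟩ + 1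
            = Tm.wt ⟨l, p, q, i, j, hij⟩ + 1 + F.wt := by rw [wt_cons]; ring
        rw [harith]
        exact hrest

include hA hB hC hμ in
lemma pd02_term (a : Fin 4) (ha : a = 0 ∨ a = 2) (l : List Fac) (p q i j : ℕ)
    (hij : i + j ≤ 1) :
    pd a (Tm.val A B C μ ⟨l, p, q, i, j, hij⟩)
      ∈ Good A B C μ (Tm.wt ⟨l, p, q, i, j, hij⟩ - 1) := by
  induction l with
  | nil =>
      have hval : Tm.val A B C μ ⟨[], p, q, i, j, hij⟩ = ND p q i j μ := by
        funext x; simp [Tm.val, facProd]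
      obtain ⟨p', q', hs, heq⟩ := pd02_ND_mu hμ a ha p q i j
      rw [hval, heq]
      have hval' : ND p' q' i j μ = Tm.val A B C μ ⟨[], p', q', i, j, hij⟩ := by
        funext x; simp [Tm.val, facProd]
      rw [hval']
      apply term_mem
      simp only [Tm.wt, List.map_nil, List.sum_nil]
      push_cast
      omega
  | cons F l ih =>
      have hval : Tm.val A B C μ ⟨F :: l, p, q, i, j, hij⟩
          = fun x => F.val A B C x * Tm.val A B C μ ⟨l, p, q, i, j, hij⟩ x := by
        funext x; simp [Tm.val, facProd, mul_assoc]
      rw [hval, pd_mul a (contDiff_facVal A B C hA hB hC F)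
        (contDiff_tmVal A B C μ hA hB hC hμ ⟨l, p, q, i, j, hij⟩)]
      have hsplit : (fun x => pd a (F.val A B C) x * Tm.val A B C μ ⟨l, p, q, i, j, hij⟩ x
            + F.val A B C x * pd a (Tm.val A B C μ ⟨l, p, q, i, j, hij⟩) x)
          = (fun x => pd a (F.val A B C) x * Tm.val A B C μ ⟨l, p, q, i, j, hij⟩ x)
            + (fun x => F.val A B C x * pd a (Tm.val A B C μ ⟨l, p, q, i, j, hij⟩) x) := rfl
      rw [hsplit]
      apply Submodule.add_mem
      · obtain ⟨p', q', hs, heq⟩ := pd02_ND_g hA hB hC a ha F.g F.p F.q F.i F.j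
        have hF' : pd a (F.val A B C) = Fac.val A B C ⟨F.g, p', q', F.i, F.j, F.hij⟩ := heq
        rw [hF']
        have : (fun x => Fac.val A B C ⟨F.g, p', q', F.i, F.j, F.hij⟩ x
              * Tm.val A B C μ ⟨l, p, q, i, j, hij⟩ x)
            = Tm.val A B C μ ⟨⟨F.g, p', q', F.i, F.j, F.hij⟩ :: l, p, q, i, j, hij⟩ := by
          funext x; simp [Tm.val, facProd, mul_assoc]
        rw [this]
        apply term_mem
        rw [wt_cons, wt_cons]
        have h1 : Fac.wt ⟨F.g, p', q', F.i, F.j, F.hij⟩ = F.wt - 1 := by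
          simp only [Fac.wt]; push_cast; omega
        omega
      · have hrest := mul_fac hA hB hC hμ ih F
        have harith : Tm.wt ⟨F :: l, p, q, i, j, hij⟩ - 1
            = Tm.wt ⟨l, p, q, i, j, hij⟩ - 1 + F.wt := by rw [wt_cons]; ring
        rw [harith]
        exact hrest

end Closure2

section Closure3

variable {A B C μ : Fn}
variable (hA : ContDiff ℝ (⊤ : ℕ∞) A) (hB : ContDiff ℝ (⊤ : ℕ∞) B) (hC : ContDiff ℝ (⊤ : ℕ∞) C)
variable (hμ : ContDiff ℝ (⊤ : ℕ∞) μ)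
variable (h2 : ∀ g : Fin 3, ∀ i j : ℕ, i + j = 2 →
  ∃ c : ℝ, (pd 1)^[i] ((pd 3)^[j] (gOf A B C g)) = fun _ => c)
variable (hμ2 : ∀ i j : ℕ, i + j = 2 → (pd 1)^[i] ((pd 3)^[j] μ) = fun _ => 0)

include hA hB hC hμ h2 hμ2 in
lemma good_spec {k : ℤ} {f : Fn} (hf : f ∈ Good A B C μ k) :
    ContDiff ℝ (⊤ : ℕ∞) f ∧ (∀ a : Fin 4, (a = 1 ∨ a = 3) → pd a f ∈ Good A B C μ (k + 1))
      ∧ (∀ a : Fin 4, (a = 0 ∨ a = 2) → pd a f ∈ Good A B C μ (k - 1)) := by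
  induction hf using Submodule.span_induction with
  | mem f hfm =>
      obtain ⟨t, ht, rfl⟩ := hfm
      obtain ⟨l, p, q, i, j, hij⟩ := t
      refine ⟨contDiff_tmVal A B C μ hA hB hC hμ _, fun a ha => ?_, fun a ha => ?_⟩
      · exact Good_mono A B C μ (by omega : k + 1 ≤ Tm.wt ⟨l,p,q,i,j,hij⟩ + 1)
          (pd13_term hA hB hC hμ h2 hμ2 a ha l p q i j hij)
      · exact Good_mono A B C μ (by omega : k - 1 ≤ Tm.wt ⟨l,p,q,i,j,hij⟩ - 1)
          (pd02_term hA hB hC hμ a ha l p q i j hij)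
  | zero =>
      refine ⟨contDiff_const, fun a _ => ?_, fun a _ => ?_⟩ <;>
        · have : pd a (0 : Fn) = (0 : Fn) := pd_const a 0
          rw [this]; exact Submodule.zero_mem _
  | add f g hfm hgm ihf ihg =>
      obtain ⟨hfs, hf13, hf02⟩ := ihf
      obtain ⟨hgs, hg13, hg02⟩ := ihg
      refine ⟨hfs.add hgs, fun a ha => ?_, fun a ha => ?_⟩
      · have : pd a (f + g) = fun x => pd a f x + pd a g x := pd_add a hfs hgs
        rw [this]
        exact Submodule.add_mem _ (hf13 a ha) (hg13 a ha)
      · have : pd a (f + g) = fun x => pd a f x + pd a g x := pd_add a hfs hgs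
        rw [this]
        exact Submodule.add_mem _ (hf02 a ha) (hg02 a ha)
  | smul c f hfm ihf =>
      obtain ⟨hfs, hf13, hf02⟩ := ihf
      have hcs : (c • f : Fn) = fun x => c * f x := rfl
      refine ⟨by rw [hcs]; exact contDiff_const.mul hfs, fun a ha => ?_, fun a ha => ?_⟩
      · have : pd a (c • f) = fun x => c * pd a f x := by rw [hcs]; exact pd_smul a c hfs
        rw [this]
        exact Submodule.smul_mem _ c (hf13 a ha)
      · have : pd a (c • f) = fun x => c * pd a f x := by rw [hcs]; exact pd_smul a c hfs
        rw [this]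
        exact Submodule.smul_mem _ c (hf02 a ha)

include hA hB hC hμ h2 hμ2 in
lemma frame_good {k : ℤ} {f : Fn} (hf : f ∈ Good A B C μ k) (a : Fin 4) (ha : a = 2 ∨ a = 3) :
    opOf A B C a f ∈ Good A B C μ (k - 1) := by
  obtain ⟨hfs, hf13, hf02⟩ := good_spec hA hB hC hμ h2 hμ2 hf
  have hAf : Fac.val A B C ⟨0, 0, 0, 0, 0, by omega⟩ = A := rfl
  have hBf : Fac.val A B C ⟨1, 0, 0, 0, 0, by omega⟩ = B := by
    show ND 0 0 0 0 (gOf A B C 1) = B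
    simp [ND, gOf]
  have hCf : Fac.val A B C ⟨2, 0, 0, 0, 0, by omega⟩ = C := by
    show ND 0 0 0 0 (gOf A B C 2) = C
    simp [ND, gOf]
  have hw : Fac.wt ⟨(0:Fin 3), 0, 0, 0, 0, by omega⟩ = -2 := rfl
  rcases ha with rfl | rfl
  · -- D' = pu - A pv - (1/2) C pV
    have h1 : pd 0 f ∈ Good A B C μ (k - 1) := hf02 0 (Or.inl rfl)
    have h2' : (fun x => A x * pd 1 f x) ∈ Good A B C μ (k - 1) := by
      have := mul_fac hA hB hC hμ (hf13 1 (Or.inl rfl)) ⟨0, 0, 0, 0, 0, by omega⟩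
      rw [hAf] at this
      exact Good_mono A B C μ (by rw [hw] at *; omega) this
    have h3 : (fun x => C x * pd 3 f x) ∈ Good A B C μ (k - 1) := by
      have := mul_fac hA hB hC hμ (hf13 3 (Or.inr rfl)) ⟨2, 0, 0, 0, 0, by omega⟩
      rw [hCf] at this
      exact Good_mono A B C μ (by simp [Fac.wt] at *; omega) this
    have heq : opOf A B C 2 f
        = pd 0 f + (-1 : ℝ) • (fun x => A x * pd 1 f x)
          + (-(1/2) : ℝ) • (fun x => C x * pd 3 f x) := by
      funext x
      show Dp A C f x = _
      simp only [Dp, Pi.add_apply, Pi.smul_apply, smul_eq_mul, pu, pv, pV]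
      ring
    rw [heq]
    exact Submodule.add_mem _ (Submodule.add_mem _ h1 (Submodule.smul_mem _ _ h2'))
      (Submodule.smul_mem _ _ h3)
  · -- δ = -pU + B pV + (1/2) C pv
    have h1 : pd 2 f ∈ Good A B C μ (k - 1) := hf02 2 (Or.inr rfl)
    have h2' : (fun x => B x * pd 3 f x) ∈ Good A B C μ (k - 1) := by
      have := mul_fac hA hB hC hμ (hf13 3 (Or.inr rfl)) ⟨1, 0, 0, 0, 0, by omega⟩
      rw [hBf] at this
      exact Good_mono A B C μ (by simp [Fac.wt] at *; omega) this
    have h3 : (fun x => C x * pd 1 f x) ∈ Good A B C μ (k - 1) := by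
      have := mul_fac hA hB hC hμ (hf13 1 (Or.inl rfl)) ⟨2, 0, 0, 0, 0, by omega⟩
      rw [hCf] at this
      exact Good_mono A B C μ (by simp [Fac.wt] at *; omega) this
    have heq : opOf A B C 3 f
        = (-1 : ℝ) • pd 2 f + (fun x => B x * pd 3 f x)
          + ((1/2) : ℝ) • (fun x => C x * pd 1 f x) := by
      funext x
      show delta B C f x = _
      simp only [delta, Pi.add_apply, Pi.smul_apply, smul_eq_mul, pU, pv, pV]
      ring
    rw [heq]
    exact Submodule.add_mem _ (Submodule.add_mem _ (Submodule.smul_mem _ _ h1) h2')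
      (Submodule.smul_mem _ _ h3)

end Closure3



lemma sum_wt_le (l : List Fac) : (l.map Fac.wt).sum ≤ -(l.length : ℤ) := by
  induction l with
  | nil => simp
  | cons F l ih =>
      simp only [List.map_cons, List.sum_cons, List.length_cons]
      have := F.wt_le
      push_cast
      omega

lemma good_one {A B C μ : Fn} {f : Fn} (hf : f ∈ Good A B C μ 1) :
    ∃ c₁ c₂ : ℝ, ∀ x, f x = c₁ * pd 1 μ x + c₂ * pd 3 μ x := by
  induction hf using Submodule.span_induction with
  | mem f hfm =>
      obtain ⟨t, ht, rfl⟩ := hfm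
      obtain ⟨l, p, q, i, j, hij⟩ := t
      have hsum := sum_wt_le l
      simp only [Tm.wt] at ht
      have hlen : l.length = 0 ∧ p = 0 ∧ q = 0 ∧ i + j = 1 := by omega
      obtain ⟨hl0, hp, hq, hij1⟩ := hlen
      rw [List.length_eq_zero_iff] at hl0
      subst hl0 hp hq
      have hi1 : i ≤ 1 := by omega
      interval_cases i
      · have hj : j = 1 := by omega
        subst hj
        refine ⟨0, 1, fun x => ?_⟩
        simp [Tm.val, facProd, ND]
      · have hj : j = 0 := by omega
        subst hj
        refine ⟨1, 0, fun x => ?_⟩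
        simp [Tm.val, facProd, ND]
  | zero => exact ⟨0, 0, fun x => by simp⟩
  | add f g hfm hgm ihf ihg =>
      obtain ⟨c₁, c₂, hf⟩ := ihf
      obtain ⟨d₁, d₂, hg⟩ := ihg
      refine ⟨c₁ + d₁, c₂ + d₂, fun x => ?_⟩
      simp only [Pi.add_apply, hf x, hg x]
      ring
  | smul c f hfm ihf =>
      obtain ⟨c₁, c₂, hf⟩ := ihf
      refine ⟨c * c₁, c * c₂, fun x => ?_⟩
      simp only [Pi.smul_apply, smul_eq_mul, hf x]
      ring

/-- with all pure second (v,V)-derivatives of A, B, C constant and all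
second (v,V)-derivatives of μ vanishing, any composition of n operators from
{∂_v, ∂_V} and n−1 operators from {D', δ} applied to μ is a constant-coefficient
combination of ∂_v μ and ∂_V μ. -/
theorem stmt9 (A B C : Fn)
    (hA : ContDiff ℝ (⊤ : ℕ∞) A) (hB : ContDiff ℝ (⊤ : ℕ∞) B) (hC : ContDiff ℝ (⊤ : ℕ∞) C)
    (h2A : ∀ i j : ℕ, i + j = 2 → ∃ c : ℝ, ∀ x, (pv^[i] (pV^[j] A)) x = c)
    (h2B : ∀ i j : ℕ, i + j = 2 → ∃ c : ℝ, ∀ x, (pv^[i] (pV^[j] B)) x = c)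
    (h2C : ∀ i j : ℕ, i + j = 2 → ∃ c : ℝ, ∀ x, (pv^[i] (pV^[j] C)) x = c)
    (μ : Fn) (hμ : ContDiff ℝ (⊤ : ℕ∞) μ)
    (hμ2 : ∀ i j : ℕ, i + j = 2 → ∀ x, (pv^[i] (pV^[j] μ)) x = 0)
    (n : ℕ) (hn : 1 ≤ n) :
    ∀ L : List (Fin 4),
      L.count 0 + L.count 1 = n →
      L.count 2 + L.count 3 = n - 1 →
      ∃ c₁ c₂ : ℝ, ∀ x, applyOps A B C L μ x = c₁ * pv μ x + c₂ * pV μ x := by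

  intro L hc01 hc23
  have h2' : ∀ g : Fin 3, ∀ i j : ℕ, i + j = 2 →
      ∃ c : ℝ, (pd 1)^[i] ((pd 3)^[j] (gOf A B C g)) = fun _ => c := by
    intro g i j hij
    fin_cases g
    · obtain ⟨c, hc⟩ := h2A i j hij; exact ⟨c, funext hc⟩
    · obtain ⟨c, hc⟩ := h2B i j hij; exact ⟨c, funext hc⟩
    · obtain ⟨c, hc⟩ := h2C i j hij; exact ⟨c, funext hc⟩
  have hμ2' : ∀ i j : ℕ, i + j = 2 → (pd 1)^[i] ((pd 3)^[j] μ) = fun _ => 0 :=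
    fun i j h => funext (hμ2 i j h)
  have key : ∀ M : List (Fin 4), applyOps A B C M μ
      ∈ Good A B C μ ((M.count 0 : ℤ) + M.count 1 - M.count 2 - M.count 3) := by
    intro M
    induction M with
    | nil =>
        refine Submodule.subset_span ⟨⟨[], 0, 0, 0, 0, by omega⟩, by simp [Tm.wt], ?_⟩
        funext x
        simp [applyOps, Tm.val, facProd, ND]
    | cons a M ih =>
        have happ : applyOps A B C (a :: M) μ = opOf A B C a (applyOps A B C M μ) := rfl
        rw [happ]
        fin_cases a
        · have hmem := (good_spec hA hB hC hμ h2' hμ2' ih).2.1 1 (Or.inl rfl)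
          have harith : (((0 : Fin 4) :: M).count 0 : ℤ) + ((0 : Fin 4) :: M).count 1
              - ((0 : Fin 4) :: M).count 2 - ((0 : Fin 4) :: M).count 3
              = ((M.count 0 : ℤ) + M.count 1 - M.count 2 - M.count 3) + 1 := by
            simp [List.count_cons]
            push_cast
            ring
          exact Good_mono A B C μ (le_of_eq harith) hmem
        · have hmem := (good_spec hA hB hC hμ h2' hμ2' ih).2.1 3 (Or.inr rfl)
          have harith : (((1 : Fin 4) :: M).count 0 : ℤ) + ((1 : Fin 4) :: M).count 1
              - ((1 : Fin 4) :: M).count 2 - ((1 : Fin 4) :: M).count 3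
              = ((M.count 0 : ℤ) + M.count 1 - M.count 2 - M.count 3) + 1 := by
            simp [List.count_cons]
            push_cast
            ring
          exact Good_mono A B C μ (le_of_eq harith) hmem
        · have hmem := frame_good hA hB hC hμ h2' hμ2' ih 2 (Or.inl rfl)
          have harith : (((2 : Fin 4) :: M).count 0 : ℤ) + ((2 : Fin 4) :: M).count 1
              - ((2 : Fin 4) :: M).count 2 - ((2 : Fin 4) :: M).count 3
              = ((M.count 0 : ℤ) + M.count 1 - M.count 2 - M.count 3) - 1 := by
            simp [List.count_cons]
            push_cast
            ring
          exact Good_mono A B C μ (le_of_eq harith) hmem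
        · have hmem := frame_good hA hB hC hμ h2' hμ2' ih 3 (Or.inr rfl)
          have harith : (((3 : Fin 4) :: M).count 0 : ℤ) + ((3 : Fin 4) :: M).count 1
              - ((3 : Fin 4) :: M).count 2 - ((3 : Fin 4) :: M).count 3
              = ((M.count 0 : ℤ) + M.count 1 - M.count 2 - M.count 3) - 1 := by
            simp [List.count_cons]
            push_cast
            ring
          exact Good_mono A B C μ (le_of_eq harith) hmem
  have hkey := key L
  have hone : (L.count 0 : ℤ) + L.count 1 - L.count 2 - L.count 3 = 1 := by omega
  rw [hone] at hkey
  exact good_one hkey
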